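/- arXiv:2010.04592 — 2 statements merged into one kernel-verified Lean document; each statement's English description precedes it below -/
import Mathlib

section
/- Convergence of tilted expectations to the essential supremum: with the setup above, E_{x∼q_β}[e^{g(x)}] → e^M as β → ∞, where M = ess sup_p g. -/
open MeasureTheory ProbabilityTheory Real Filter

/-!
Under the tilted measure `q_β = p.tilted (β • g)`, the mass of `{g ≤ a}` is at most
`e^{β(a-b)} / p{g ≥ b}` for `β ≥ 0` and any `b`, so it vanishes as `β → ∞` whenever `a < b < ess sup g`.
Hence `∫ e^g dq_β ≥ e^a (1 - q_β{g ≤ a}) → e^a` for every `a < ess sup g`, while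
`∫ e^g dq_β ≤ e^{ess sup g}` because `g ≤ ess sup g` almost everywhere and `q_β ≪ p`.
-/

section Tilted

variable {X : Type*} [MeasurableSpace X] {μ : Measure X} {g : X → ℝ} {β : ℝ}

lemma measureReal_tilted (f : X → ℝ) {s : Set X} (hs : MeasurableSet s) :
    (μ.tilted f).real s = (∫ x in s, exp (f x) ∂μ) / ∫ x, exp (f x) ∂μ := by
  rw [measureReal_def, tilted_apply_eq_ofReal_integral' f hs, integral_div,
    ENNReal.toReal_ofReal (by positivity)]

lemma exp_mul_mul_measureReal_le_integral_exp [IsFiniteMeasure μ] (hg : Measurable g)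
    (hint : Integrable (fun x => exp (β * g x)) μ) (hβ : 0 ≤ β) (b : ℝ) :
    exp (β * b) * μ.real {x | b ≤ g x} ≤ ∫ x, exp (β * g x) ∂μ :=
  calc exp (β * b) * μ.real {x | b ≤ g x}
      ≤ ∫ x in {x | b ≤ g x}, exp (β * g x) ∂μ :=
        setIntegral_ge_of_const_le_real (measurableSet_le measurable_const hg)
          (measure_ne_top _ _) (fun _ hx => exp_le_exp.2 (mul_le_mul_of_nonneg_left hx hβ))
          hint.integrableOn
    _ ≤ ∫ x, exp (β * g x) ∂μ := setIntegral_le_integral hint (ae_of_all _ fun _ => (exp_pos _).le)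

lemma setIntegral_setOf_le_exp_mul_le [IsProbabilityMeasure μ] (hg : Measurable g)
    (hint : Integrable (fun x => exp (β * g x)) μ) (hβ : 0 ≤ β) (a : ℝ) :
    ∫ x in {x | g x ≤ a}, exp (β * g x) ∂μ ≤ exp (β * a) :=
  calc ∫ x in {x | g x ≤ a}, exp (β * g x) ∂μ
      ≤ ∫ _ in {x | g x ≤ a}, exp (β * a) ∂μ :=
        setIntegral_mono_on hint.integrableOn (integrableOn_const (measure_ne_top _ _))
          (measurableSet_le hg measurable_const)
          (fun _ hx => exp_le_exp.2 (mul_le_mul_of_nonneg_left hx hβ))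
    _ = μ.real {x | g x ≤ a} * exp (β * a) := by rw [setIntegral_const, smul_eq_mul]
    _ ≤ exp (β * a) := mul_le_of_le_one_left (exp_pos _).le measureReal_le_one

lemma measureReal_tilted_setOf_le_le [IsProbabilityMeasure μ] (hg : Measurable g)
    (hint : Integrable (fun x => exp (β * g x)) μ) (hβ : 0 ≤ β) {a b : ℝ}
    (hb : 0 < μ.real {x | b ≤ g x}) :
    (μ.tilted (fun x => β * g x)).real {x | g x ≤ a}
      ≤ exp (β * (a - b)) / μ.real {x | b ≤ g x} := by
  have hZ := exp_mul_mul_measureReal_le_integral_exp hg hint hβ b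
  have hZpos : 0 < ∫ x, exp (β * g x) ∂μ := lt_of_lt_of_le (by positivity) hZ
  rw [measureReal_tilted _ (measurableSet_le hg measurable_const),
    div_le_div_iff₀ hZpos hb]
  calc (∫ x in {x | g x ≤ a}, exp (β * g x) ∂μ) * μ.real {x | b ≤ g x}
      ≤ exp (β * a) * μ.real {x | b ≤ g x} :=
        mul_le_mul_of_nonneg_right (setIntegral_setOf_le_exp_mul_le hg hint hβ a) hb.le
    _ = exp (β * (a - b)) * (exp (β * b) * μ.real {x | b ≤ g x}) := by
        rw [← mul_assoc, ← exp_add]; ring_nf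
    _ ≤ exp (β * (a - b)) * ∫ x, exp (β * g x) ∂μ :=
        mul_le_mul_of_nonneg_left hZ (exp_pos _).le

lemma tendsto_measureReal_tilted_setOf_le [IsProbabilityMeasure μ] (hg : Measurable g)
    (hint : ∀ β, Integrable (fun x => exp (β * g x)) μ) {a b : ℝ} (hab : a < b)
    (hb : 0 < μ.real {x | b ≤ g x}) :
    Tendsto (fun β : ℝ => (μ.tilted (fun x => β * g x)).real {x | g x ≤ a}) atTop (nhds 0) := by
  have hbound : Tendsto (fun β : ℝ => exp (β * (a - b)) / μ.real {x | b ≤ g x})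
      atTop (nhds 0) := by
    simpa using (tendsto_exp_atBot.comp
      (tendsto_id.atTop_mul_const_of_neg (sub_neg.2 hab))).div_const _
  refine tendsto_of_tendsto_of_tendsto_of_le_of_le' tendsto_const_nhds hbound
    (Eventually.of_forall fun _ => measureReal_nonneg) ?_
  filter_upwards [eventually_ge_atTop 0] with β hβ
  exact measureReal_tilted_setOf_le_le hg (hint β) hβ hb

lemma measureReal_setOf_le_pos_of_lt_essSup [IsFiniteMeasure μ]
    (hcob : IsCoboundedUnder (· ≤ ·) (ae μ) g) {b : ℝ} (hb : b < essSup g μ) :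
    0 < μ.real {x | b ≤ g x} := by
  have hfreq : ∃ᵐ x ∂μ, b < g x := frequently_lt_of_lt_limsup hcob hb
  refine ENNReal.toReal_pos (fun h0 => ?_) (measure_ne_top _ _)
  exact frequently_ae_iff.1 (hfreq.mono fun _ hx => hx.le) h0

lemma integral_exp_le_exp_of_ae_le [IsProbabilityMeasure μ] {M : ℝ}
    (h : ∀ᵐ x ∂μ, g x ≤ M) : ∫ x, exp (g x) ∂μ ≤ exp M := by
  calc ∫ x, exp (g x) ∂μ ≤ ∫ _, exp M ∂μ :=
        integral_mono_of_nonneg (ae_of_all _ fun _ => (exp_pos _).le) (integrable_const _)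
          (h.mono fun _ hx => exp_le_exp.2 hx)
    _ = exp M := by simp

lemma exp_mul_one_sub_measureReal_le_integral_exp [IsProbabilityMeasure μ] (hg : Measurable g)
    (hexp : Integrable (fun x => exp (g x)) μ) (a : ℝ) :
    exp a * (1 - μ.real {x | g x ≤ a}) ≤ ∫ x, exp (g x) ∂μ := by
  have hs : MeasurableSet {x | g x ≤ a} := measurableSet_le hg measurable_const
  rw [← probReal_compl_eq_one_sub hs]
  calc exp a * μ.real {x | g x ≤ a}ᶜ ≤ ∫ x in {x | g x ≤ a}ᶜ, exp (g x) ∂μ :=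
        setIntegral_ge_of_const_le_real hs.compl (measure_ne_top _ _)
          (fun x (hx : ¬ g x ≤ a) => exp_le_exp.2 (not_le.1 hx).le) hexp.integrableOn
    _ ≤ ∫ x, exp (g x) ∂μ := setIntegral_le_integral hexp (ae_of_all _ fun _ => (exp_pos _).le)

end Tilted

theorem tendsto_integral_exp_tilted_essSup {X : Type*} [MeasurableSpace X] {μ : Measure X}
    [IsProbabilityMeasure μ] {g : X → ℝ} (hg : Measurable g) {C : ℝ} (hC : ∀ x, |g x| ≤ C) :
    Tendsto (fun β : ℝ => ∫ x, exp (g x) ∂(μ.tilted (fun x => β * g x)))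
      atTop (nhds (exp (essSup g μ))) := by
  have hIcc : ∀ x, g x ∈ Set.Icc (-C) C := fun x => abs_le.1 (hC x)
  have hle : IsBoundedUnder (· ≤ ·) (ae μ) g := isBoundedUnder_of ⟨C, fun x => (hIcc x).2⟩
  have hcob : IsCoboundedUnder (· ≤ ·) (ae μ) g :=
    (isBoundedUnder_of ⟨-C, fun x => (hIcc x).1⟩ :
      IsBoundedUnder (· ≥ ·) (ae μ) g).isCoboundedUnder_le
  have hint : ∀ β, Integrable (fun x => exp (β * g x)) μ := fun β =>
    integrable_exp_mul_of_mem_Icc hg.aemeasurable (ae_of_all _ hIcc)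
  have hprob : ∀ β : ℝ, IsProbabilityMeasure (μ.tilted fun x => β * g x) := fun β =>
    isProbabilityMeasure_tilted (hint β)
  refine tendsto_order.2 ⟨fun a ha => ?_, fun a ha => Eventually.of_forall fun β =>
    (integral_exp_le_exp_of_ae_le
      (tilted_absolutelyContinuous μ _ |>.ae_le (ae_le_essSup hle))).trans_lt ha⟩
  obtain ⟨m, hmM, ham⟩ : ∃ m < essSup g μ, a < exp m :=
    ((continuous_exp.tendsto _).eventually (lt_mem_nhds ha)).exists_lt
  obtain ⟨b, hmb, hbM⟩ := exists_between hmM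
  have hlim : Tendsto (fun β : ℝ => exp m * (1 - (μ.tilted fun x => β * g x).real {x | g x ≤ m}))
      atTop (nhds (exp m)) := by
    simpa using ((tendsto_measureReal_tilted_setOf_le hg hint hmb
      (measureReal_setOf_le_pos_of_lt_essSup hcob hbM)).const_sub 1).const_mul (exp m)
  filter_upwards [hlim.eventually (lt_mem_nhds ham)] with β hβ
  have hexp : Integrable (fun x => exp (g x)) (μ.tilted fun x => β * g x) := by
    simpa using integrable_exp_mul_of_mem_Icc (t := 1) hg.aemeasurable (ae_of_all _ hIcc)
  exact hβ.trans_le (exp_mul_one_sub_measureReal_le_integral_exp hg hexp m)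

theorem stmt_8 {X : Type*} [MeasurableSpace X] (p : Measure X) [IsProbabilityMeasure p]
    (g : X → ℝ) (hg : Measurable g) (hbdd : ∃ C : ℝ, ∀ x, |g x| ≤ C)
    (M : ℝ) (hM : M = essSup g p)
    (Z : ℝ → ℝ) (hZ : ∀ β, Z β = ∫ x, exp (β * g x) ∂p) :
    Tendsto
      (fun β : ℝ =>
        ∫ x, exp (g x) ∂(p.withDensity (fun x => ENNReal.ofReal (exp (β * g x) / Z β))))
      atTop (nhds (exp M)) := by
  obtain ⟨C, hC⟩ := hbdd
  have htilted : ∀ β, p.withDensity (fun x => ENNReal.ofReal (exp (β * g x) / Z β))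
      = p.tilted (fun x => β * g x) := fun β => by rw [hZ]; rfl
  simpa only [htilted, hM] using tendsto_integral_exp_tilted_essSup hg hC
end

section
/- Decomposition of the limiting loss: L_∞(f, q) = L_align(f) + L_unif(f, q) − 1/t², where L_align(f) = (1/2) E_{x,x⁺}‖f(x) − f(x⁺)‖² and L_unif(f, q) = E_{x∼p} log E_{x⁻∼q}[e^{f(x)ᵀf(x⁻)}], for f mapping into the sphere of radius 1/t. -/
open MeasureTheory Real ProbabilityTheory
open scoped RealInnerProductSpace

/-- The conditional distribution of `p` on points with the same label as the anchor `x`. -/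
noncomputable def posCond {X C : Type*} [MeasurableSpace X] (p : Measure X) (h : X → C)
    (x : X) : Measure X :=
  p[|{x' | h x' = h x}]

/-- The limiting contrastive loss `L_∞(f, q)`. -/
noncomputable def Linf {X C : Type*} [MeasurableSpace X] {d : ℕ} (p : Measure X)
    (h : X → C) (f : X → EuclideanSpace ℝ (Fin d)) (q : X → Measure X) : ℝ :=
  ∫ x, ∫ xp, -log (exp ⟪f x, f xp⟫ / ∫ xm, exp ⟪f x, f xm⟫ ∂(q x))
    ∂(posCond p h x) ∂p

/-- The alignment term `L_align(f) = (1/2) E ‖f(x) − f(x⁺)‖²`. -/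
noncomputable def Lalign {X C : Type*} [MeasurableSpace X] {d : ℕ} (p : Measure X)
    (h : X → C) (f : X → EuclideanSpace ℝ (Fin d)) : ℝ :=
  (1 / 2) * ∫ x, ∫ xp, ‖f x - f xp‖ ^ 2 ∂(posCond p h x) ∂p

/-- The uniformity term `L_unif(f, q) = E_x log E_{x⁻∼q} e^{⟪f x, f x⁻⟫}`. -/
noncomputable def Lunif {X : Type*} [MeasurableSpace X] {d : ℕ} (p : Measure X)
    (f : X → EuclideanSpace ℝ (Fin d)) (q : X → Measure X) : ℝ :=
  ∫ x, log (∫ xm, exp ⟪f x, f xm⟫ ∂(q x)) ∂p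

theorem stmt_13 {X : Type*} [MeasurableSpace X]
    {C : Type*} (p : Measure X) [IsProbabilityMeasure p]
    (h : X → C) {d : ℕ} (t : ℝ) (ht : 0 < t)
    (f : X → EuclideanSpace ℝ (Fin d)) (hf : Measurable f)
    (hsphere : ∀ x, ‖f x‖ = 1 / t)
    (q : X → Measure X) (hq : ∀ x, IsProbabilityMeasure (q x))
    (hpos : ∀ x : X, IsProbabilityMeasure (posCond p h x))
    (hint1 : ∀ x, Integrable (fun xp => ‖f x - f xp‖ ^ 2) (posCond p h x))
    (hint2 : ∀ x, Integrable (fun xm => exp ⟪f x, f xm⟫) (q x))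
    (hint3 : Integrable (fun x => ∫ xp, ‖f x - f xp‖ ^ 2 ∂(posCond p h x)) p)
    (hint4 : Integrable (fun x => log (∫ xm, exp ⟪f x, f xm⟫ ∂(q x))) p) :
    Linf p h f q = Lalign p h f + Lunif p f q - 1 / t ^ 2 := by
  have hZ : ∀ x, 0 < ∫ xm, exp ⟪f x, f xm⟫ ∂(q x) := by
    intro x
    haveI := hq x
    exact integral_exp_pos (hint2 x)
  have hinner : ∀ x xp, ⟪f x, f xp⟫ = 1 / t ^ 2 - (1 / 2) * ‖f x - f xp‖ ^ 2 := by
    intro x xp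
    have h1 := norm_sub_sq_real (f x) (f xp)
    rw [hsphere x, hsphere xp] at h1
    have h2 : (1 / t) ^ 2 = 1 / t ^ 2 := by ring
    rw [h2] at h1
    linarith
  have key : ∀ x xp, -log (exp ⟪f x, f xp⟫ / ∫ xm, exp ⟪f x, f xm⟫ ∂(q x))
      = (1 / 2) * ‖f x - f xp‖ ^ 2 - 1 / t ^ 2 + log (∫ xm, exp ⟪f x, f xm⟫ ∂(q x)) := by
    intro x xp
    rw [log_div (exp_ne_zero _) (hZ x).ne', log_exp, hinner x xp]
    ring
  have inner_eq : ∀ x, (∫ xp, -log (exp ⟪f x, f xp⟫ / ∫ xm, exp ⟪f x, f xm⟫ ∂(q x))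
        ∂(posCond p h x))
      = (1 / 2) * (∫ xp, ‖f x - f xp‖ ^ 2 ∂(posCond p h x)) - 1 / t ^ 2
        + log (∫ xm, exp ⟪f x, f xm⟫ ∂(q x)) := by
    intro x
    haveI := hpos x
    simp_rw [key x]
    have i1 : Integrable (fun xp => (1 : ℝ) / 2 * ‖f x - f xp‖ ^ 2) (posCond p h x) :=
      (hint1 x).const_mul _
    have i2 : Integrable (fun xp => (1 : ℝ) / 2 * ‖f x - f xp‖ ^ 2 - 1 / t ^ 2)
        (posCond p h x) := i1.sub (integrable_const _)
    rw [integral_add i2 (integrable_const _), integral_sub i1 (integrable_const _),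
      integral_const_mul, integral_const, integral_const]
    simp
  unfold Linf Lalign Lunif
  simp_rw [inner_eq]
  have j1 : Integrable (fun x => (1 : ℝ) / 2 * ∫ xp, ‖f x - f xp‖ ^ 2 ∂(posCond p h x)) p :=
    hint3.const_mul _
  have j2 : Integrable
      (fun x => (1 : ℝ) / 2 * (∫ xp, ‖f x - f xp‖ ^ 2 ∂(posCond p h x)) - 1 / t ^ 2) p :=
    j1.sub (integrable_const _)
  rw [integral_add j2 hint4, integral_sub j1 (integrable_const _),
    integral_const_mul, integral_const]
  simp
  ring
end
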